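/- The time map T(α) tends to +∞ as α → (π/2)⁻. -/
import Mathlib


open Real Filter

/-- The time map `T(α) = ∫₀^α dx / √(cos 2x − cos 2α)`. -/
noncomputable def timeMapT (α : ℝ) : ℝ :=
  ∫ x in (0:ℝ)..α, 1 / Real.sqrt (Real.cos (2 * x) - Real.cos (2 * α))

namespace TimeMapAux

/-- Key pointwise lower bound on the denominator. -/
lemma cos_sub_cos_lower {α x : ℝ} (h0 : 0 < α) (h1 : α < π / 2)
    (hx0 : 0 ≤ x) (hxα : x ≤ α) :
    4 * Real.cos α * Real.sin α / π * (α - x) ≤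
      Real.cos (2 * x) - Real.cos (2 * α) := by
  have hπ : 0 < π := Real.pi_pos
  have hsinα : 0 < Real.sin α := Real.sin_pos_of_pos_of_lt_pi h0 (by linarith)
  have hcosα : 0 < Real.cos α := Real.cos_pos_of_mem_Ioo ⟨by linarith, h1⟩
  have hsinx : 0 ≤ Real.sin x := Real.sin_nonneg_of_nonneg_of_le_pi hx0 (by linarith)
  -- cos 2x - cos 2α = 2 (sin²α - sin²x)
  have hD : Real.cos (2 * x) - Real.cos (2 * α)
      = 2 * (Real.sin α ^ 2 - Real.sin x ^ 2) := by
    rw [Real.cos_two_mul' x, Real.cos_two_mul' α]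
    have hx' := Real.sin_sq_add_cos_sq x
    have hα' := Real.sin_sq_add_cos_sq α
    linarith
  -- sin α - sin x = 2 sin((α-x)/2) cos((α+x)/2)
  have hsub : Real.sin α - Real.sin x
      = 2 * Real.sin ((α - x) / 2) * Real.cos ((α + x) / 2) := Real.sin_sub_sin α x
  have h2 : 2 / π * ((α - x) / 2) ≤ Real.sin ((α - x) / 2) :=
    Real.mul_le_sin (by linarith) (by linarith)
  have h3 : Real.cos α ≤ Real.cos ((α + x) / 2) :=
    Real.cos_le_cos_of_nonneg_of_le_pi (by linarith) (by linarith) (by linarith)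
  have hcosmid : 0 < Real.cos ((α + x) / 2) := lt_of_lt_of_le hcosα h3
  have hs2 : 0 ≤ Real.sin ((α - x) / 2) := by
    refine le_trans ?_ h2
    have : 0 ≤ α - x := by linarith
    positivity
  -- sin α - sin x ≥ (2/π) * (α - x) / 2 * 2 * cos α = 2 (α - x) cos α / π
  have h4 : 2 * (2 / π * ((α - x) / 2)) * Real.cos α ≤ Real.sin α - Real.sin x := by
    rw [hsub]
    have := mul_le_mul h2 h3 hcosα.le hs2
    nlinarith
  have h5 : Real.sin α ≤ Real.sin α + Real.sin x := by linarith
  have h6 : 0 ≤ Real.sin α - Real.sin x := by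
    refine le_trans ?_ h4
    have hαx : 0 ≤ α - x := by linarith
    positivity
  have key : (2 * (2 / π * ((α - x) / 2)) * Real.cos α) * Real.sin α
      ≤ (Real.sin α - Real.sin x) * (Real.sin α + Real.sin x) := by
    refine mul_le_mul h4 h5 hsinα.le h6
  rw [hD]
  have : (Real.sin α - Real.sin x) * (Real.sin α + Real.sin x)
      = Real.sin α ^ 2 - Real.sin x ^ 2 := by ring
  rw [← this]
  have hπ' : (2:ℝ) / π * ((α - x) / 2) = (α - x) / π := by ring
  calc 4 * Real.cos α * Real.sin α / π * (α - x)
      = 2 * ((2 * (2 / π * ((α - x) / 2)) * Real.cos α) * Real.sin α) := by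
        field_simp; ring
    _ ≤ 2 * ((Real.sin α - Real.sin x) * (Real.sin α + Real.sin x)) := by linarith

lemma integrable_aux {α : ℝ} (h0 : 0 < α) (h1 : α < π / 2) :
    IntervalIntegrable
      (fun x => 1 / Real.sqrt (Real.cos (2 * x) - Real.cos (2 * α)))
      MeasureTheory.volume 0 α := by
  set c : ℝ := 4 * Real.cos α * Real.sin α / π with hc
  have hπ : 0 < π := Real.pi_pos
  have hsinα : 0 < Real.sin α := Real.sin_pos_of_pos_of_lt_pi h0 (by linarith)
  have hcosα : 0 < Real.cos α := Real.cos_pos_of_mem_Ioo ⟨by linarith, h1⟩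
  have hcpos : 0 < c := by rw [hc]; positivity
  -- dominating function
  have hg : IntervalIntegrable
      (fun x => (Real.sqrt c)⁻¹ * (α - x) ^ (-(1/2 : ℝ)))
      MeasureTheory.volume 0 α := by
    have h := (intervalIntegral.intervalIntegrable_rpow' (a := 0) (b := α)
      (r := -(1/2 : ℝ)) (by norm_num)).comp_sub_left α
    simpa using (h.const_mul (Real.sqrt c)⁻¹).symm
  refine hg.mono_fun ?_ ?_
  · apply Measurable.aestronglyMeasurable
    apply Measurable.div measurable_const
    exact (Real.continuous_sqrt.measurable).comp
      ((Real.continuous_cos.measurable.comp (measurable_const_mul 2)).sub measurable_const)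
  · have hIoc : Set.uIoc (0:ℝ) α = Set.Ioc 0 α := Set.uIoc_of_le h0.le
    filter_upwards [MeasureTheory.ae_restrict_mem measurableSet_uIoc] with x hx
    rw [hIoc] at hx
    obtain ⟨hx0, hxα⟩ := hx
    have hD := cos_sub_cos_lower h0 h1 hx0.le hxα
    have hD0 : 0 ≤ Real.cos (2 * x) - Real.cos (2 * α) := by
      refine le_trans ?_ hD
      have : 0 ≤ α - x := by linarith
      positivity
    have hf0 : 0 ≤ 1 / Real.sqrt (Real.cos (2 * x) - Real.cos (2 * α)) := by positivity
    have hg0 : 0 ≤ (Real.sqrt c)⁻¹ * (α - x) ^ (-(1/2 : ℝ)) := by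
      have : 0 ≤ α - x := by linarith
      positivity
    rw [Real.norm_eq_abs, Real.norm_eq_abs, abs_of_nonneg hf0, abs_of_nonneg hg0]
    rcases eq_or_lt_of_le hxα with heq | hlt
    · subst heq
      simp [Real.sqrt_eq_zero']
    · have hαx : 0 < α - x := by linarith
      have hrw : (α - x) ^ (-(1/2 : ℝ)) = (Real.sqrt (α - x))⁻¹ := by
        rw [Real.rpow_neg hαx.le, ← Real.sqrt_eq_rpow]
      rw [hrw, ← mul_inv, one_div]
      have hsqrt : Real.sqrt c * Real.sqrt (α - x) ≤
          Real.sqrt (Real.cos (2 * x) - Real.cos (2 * α)) := by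
        rw [← Real.sqrt_mul hcpos.le]
        exact Real.sqrt_le_sqrt hD
      have hpos : 0 < Real.sqrt c * Real.sqrt (α - x) := by positivity
      exact inv_anti₀ hpos hsqrt

/-- Lower bound: `T(α) ≥ (√2)⁻¹ * (log(π/2) - log(π/2 - α))`. -/
lemma lower_bound {α : ℝ} (h0 : 0 < α) (h1 : α < π / 2) :
    (Real.sqrt 2)⁻¹ * Real.log (π / 2 / (π / 2 - α)) ≤ timeMapT α := by
  have hπ : 0 < π := Real.pi_pos
  have hαπ : 0 < π / 2 - α := by linarith
  -- integrability of the small function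
  have hgcont : ContinuousOn (fun x => (Real.sqrt 2)⁻¹ * (π / 2 - x)⁻¹) (Set.uIcc 0 α) := by
    apply ContinuousOn.mul continuousOn_const
    apply ContinuousOn.inv₀ (by fun_prop)
    intro x hx
    rw [Set.uIcc_of_le h0.le] at hx
    have := hx.2
    intro h
    nlinarith [hx.2]
  have hg : IntervalIntegrable (fun x => (Real.sqrt 2)⁻¹ * (π / 2 - x)⁻¹)
      MeasureTheory.volume 0 α := hgcont.intervalIntegrable
  have hf := integrable_aux h0 h1
  have hmono : (∫ x in (0:ℝ)..α, (Real.sqrt 2)⁻¹ * (π / 2 - x)⁻¹) ≤ timeMapT α := by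
    refine intervalIntegral.integral_mono_ae_restrict h0.le hg hf ?_
    have hne : ∀ᵐ (x : ℝ), x ≠ α := by
      rw [MeasureTheory.ae_iff]
      have : {x : ℝ | ¬x ≠ α} = {α} := by ext y; simp
      rw [this]
      exact MeasureTheory.measure_singleton α
    filter_upwards [MeasureTheory.ae_restrict_of_ae hne,
      MeasureTheory.ae_restrict_mem measurableSet_Icc] with x hxne hx
    obtain ⟨hx0, hxα⟩ := hx
    have hlt : x < α := lt_of_le_of_ne hxα hxne
    have hD := cos_sub_cos_lower h0 h1 hx0 hxα
    have hcosα : 0 < Real.cos α := Real.cos_pos_of_mem_Ioo ⟨by linarith, h1⟩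
    have hsinα : 0 < Real.sin α := Real.sin_pos_of_pos_of_lt_pi h0 (by linarith)
    have hD0 : 0 < Real.cos (2 * x) - Real.cos (2 * α) := by
      refine lt_of_lt_of_le ?_ hD
      have : 0 < α - x := by linarith
      positivity
    -- upper bound on the denominator: D ≤ 2 (π/2 - x)²
    have hcosx : 0 ≤ Real.cos x := Real.cos_nonneg_of_mem_Icc ⟨by linarith, by linarith⟩
    have hcosx' : Real.cos x ≤ π / 2 - x := by
      have := Real.sin_le (x := π / 2 - x) (by linarith)
      rwa [Real.sin_pi_div_two_sub] at this
    have hDle : Real.cos (2 * x) - Real.cos (2 * α) ≤ 2 * (π / 2 - x) ^ 2 := by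
      have h2x : Real.cos (2 * x) = 2 * Real.cos x ^ 2 - 1 := Real.cos_two_mul x
      have hge : -1 ≤ Real.cos (2 * α) := Real.neg_one_le_cos _
      nlinarith
    have hsq : Real.sqrt (Real.cos (2 * x) - Real.cos (2 * α)) ≤
        Real.sqrt 2 * (π / 2 - x) := by
      have hx2 : 0 < π / 2 - x := by linarith
      calc Real.sqrt (Real.cos (2 * x) - Real.cos (2 * α))
          ≤ Real.sqrt (2 * (π / 2 - x) ^ 2) := Real.sqrt_le_sqrt hDle
        _ = Real.sqrt 2 * (π / 2 - x) := by
            rw [Real.sqrt_mul (by norm_num), Real.sqrt_sq hx2.le]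
    have hsqpos : 0 < Real.sqrt (Real.cos (2 * x) - Real.cos (2 * α)) :=
      Real.sqrt_pos.mpr hD0
    rw [one_div, ← mul_inv]
    exact inv_anti₀ hsqpos hsq
  -- compute the small integral
  have hcomp : (∫ x in (0:ℝ)..α, (π / 2 - x)⁻¹) = Real.log (π / 2 / (π / 2 - α)) := by
    have := intervalIntegral.integral_comp_sub_left (a := (0:ℝ)) (b := α)
      (fun u => u⁻¹) (π / 2)
    rw [this, sub_zero]
    rw [integral_inv]
    rw [Set.uIcc_of_le (by linarith)]
    rintro ⟨ha, hb⟩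
    linarith
  calc (Real.sqrt 2)⁻¹ * Real.log (π / 2 / (π / 2 - α))
      = ∫ x in (0:ℝ)..α, (Real.sqrt 2)⁻¹ * (π / 2 - x)⁻¹ := by
        rw [intervalIntegral.integral_const_mul, hcomp]
    _ ≤ timeMapT α := hmono

end TimeMapAux

/-- `T(α) → +∞` as `α → (π/2)⁻`. -/
theorem timeMapT_tendsto_pi_div_two :
    Tendsto timeMapT (nhdsWithin (π / 2) (Set.Iio (π / 2))) atTop := by
  have hπ : 0 < π := Real.pi_pos
  -- the lower bound function tends to atTop
  have hsub : Tendsto (fun α => π / 2 - α) (nhdsWithin (π / 2) (Set.Iio (π / 2)))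
      (nhdsWithin 0 (Set.Ioi 0)) := by
    rw [tendsto_nhdsWithin_iff]
    constructor
    · have : Tendsto (fun α : ℝ => π / 2 - α) (nhdsWithin (π / 2) (Set.Iio (π / 2)))
          (nhds (π / 2 - π / 2)) :=
        (tendsto_const_nhds.sub (tendsto_id.mono_left nhdsWithin_le_nhds))
      simpa using this
    · filter_upwards [self_mem_nhdsWithin] with α hα
      exact sub_pos.mpr (Set.mem_Iio.mp hα)
  have hinv : Tendsto (fun α => (π / 2 - α)⁻¹)
      (nhdsWithin (π / 2) (Set.Iio (π / 2))) atTop :=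
    tendsto_inv_nhdsGT_zero.comp hsub
  have hmul : Tendsto (fun α => π / 2 / (π / 2 - α))
      (nhdsWithin (π / 2) (Set.Iio (π / 2))) atTop := by
    simp only [div_eq_mul_inv]
    exact hinv.const_mul_atTop (by linarith)
  have hlog : Tendsto (fun α => Real.log (π / 2 / (π / 2 - α)))
      (nhdsWithin (π / 2) (Set.Iio (π / 2))) atTop :=
    Real.tendsto_log_atTop.comp hmul
  have hφ : Tendsto (fun α => (Real.sqrt 2)⁻¹ * Real.log (π / 2 / (π / 2 - α)))
      (nhdsWithin (π / 2) (Set.Iio (π / 2))) atTop := by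
    refine hlog.const_mul_atTop ?_
    positivity
  refine tendsto_atTop_mono' _ ?_ hφ
  have hmem : Set.Ioo 0 (π / 2) ∈ nhdsWithin (π / 2) (Set.Iio (π / 2)) :=
    Ioo_mem_nhdsLT_of_mem ⟨by linarith, le_refl _⟩
  filter_upwards [hmem] with α hα
  exact TimeMapAux.lower_bound hα.1 hα.2
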